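/- Fix κ ≥ 0. If A ∈ C²(ℝ, M²) satisfies det A(t) = 1 for all t and solves Ä(t) + κA(t) = λ(t)·cof A(t) for some λ ∈ C⁰(ℝ,ℝ), then the sign of λ is constant in time: for all t ∈ ℝ, λ(t) > 0 iff λ(0) > 0, λ(t) = 0 iff λ(0) = 0, and λ(t) < 0 iff λ(0) < 0. (In the fluid interpretation, the sign of the pressure is preserved under affine motion.) -/

import Mathlib

open Matrix

noncomputable section

/-- `M²`: the space of 2×2 real matrices. -/
abbrev M2 : Type := Matrix (Fin 2) (Fin 2) ℝ

/-- Frobenius inner product `⟨A,B⟩ = tr(AᵀB)`. -/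
def mip (A B : M2) : ℝ := (Aᵀ * B).trace

/-- Frobenius norm `|A| = ⟨A,A⟩^{1/2}`. -/
def fnorm (A : M2) : ℝ := Real.sqrt (mip A A)

/-- The matrix Z = [[0,−1],[1,0]]. -/
def Zm : M2 := !![0, -1; 1, 0]

/-- The matrix K = [[1,0],[0,−1]]. -/
def Km : M2 := !![1, 0; 0, -1]

/-- The matrix M = [[0,1],[1,0]]. -/
def Mm : M2 := !![0, 1; 1, 0]

/-- Cofactor: cof [[a,b],[c,d]] = [[d,−c],[−b,a]]. -/
def cofm (A : M2) : M2 := !![A 1 1, -(A 1 0); -(A 0 1), A 0 0]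

/-- Membership in SO(2,ℝ). -/
def isSO (U : M2) : Prop := U.det = 1 ∧ U⁻¹ = Uᵀ

/-- The rotation U(θ) = cos θ·I + sin θ·Z. -/
def Um (θ : ℝ) : M2 := Real.cos θ • (1 : M2) + Real.sin θ • Zm

/-- Invariant X₁(A,B) = ½|B|² + (κ/2)|A|². -/
def X1 (κ : ℝ) (A B : M2) : ℝ := (1/2) * mip B B + (κ/2) * mip A A

/-- Invariant X₂(A,B) = ½⟨ZA − AZ, B⟩. -/
def X2 (A B : M2) : ℝ := (1/2) * mip (Zm * A - A * Zm) B

/-- Invariant X₃(A,B) = ½⟨ZA + AZ, B⟩. -/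
def X3 (A B : M2) : ℝ := (1/2) * mip (Zm * A + A * Zm) B

/-- Lagrange multiplier Λ(A,B) = 2(κ − det B)/|A|². -/
def Lam (κ : ℝ) (A B : M2) : ℝ := 2 * (κ - B.det) / (mip A A)

attribute [local instance] Matrix.normedAddCommGroup Matrix.normedSpace

/-! Differentiating `det A = 1` twice along the motion gives `⟨cof A, Ȧ⟩ = 0` and then
`λ |A|² = 2 (κ - det Ȧ)`. Hence `Q = |A|² (κ - det Ȧ) = λ |A|⁴ / 2` is conserved: using
`(det Ȧ)˙ = ⟨cof Ȧ, Ä⟩ = λ ⟨A, Ȧ⟩`, its derivative is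
`⟨A, Ȧ⟩ (2 (κ - det Ȧ) - λ |A|²) = 0`. Since `|A|² ≥ 2 det A = 2 > 0`, the sign of `λ`
is the sign of the constant `Q`. -/

lemma mip_eq_entries (A B : M2) :
    mip A B = A 0 0 * B 0 0 + A 0 1 * B 0 1 + A 1 0 * B 1 0 + A 1 1 * B 1 1 := by
  simp only [mip, trace_fin_two, mul_apply, Fin.sum_univ_two, transpose_apply]; ring

lemma mip_comm (A B : M2) : mip A B = mip B A := by
  simp only [mip_eq_entries]; ring

lemma mip_sub_right (A B C : M2) : mip A (B - C) = mip A B - mip A C := by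
  simp only [mip, Matrix.mul_sub, trace_sub]

lemma mip_smul_right (c : ℝ) (A B : M2) : mip A (c • B) = c * mip A B := by
  simp only [mip, Matrix.mul_smul, trace_smul, smul_eq_mul]

lemma mip_cofm_cofm (A B : M2) : mip (cofm A) (cofm B) = mip A B := by
  simp only [mip_eq_entries, cofm, of_apply, cons_val', cons_val_zero, cons_val_one,
    cons_val_fin_one]
  ring

lemma mip_cofm_comm (A B : M2) : mip (cofm A) B = mip (cofm B) A := by
  simp only [mip_eq_entries, cofm, of_apply, cons_val', cons_val_zero, cons_val_one,
    cons_val_fin_one]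
  ring

lemma mip_cofm_self (A : M2) : mip (cofm A) A = 2 * A.det := by
  simp only [mip_eq_entries, cofm, of_apply, cons_val', cons_val_zero, cons_val_one,
    cons_val_fin_one, det_fin_two]
  ring

lemma two_mul_det_le_mip_self (A : M2) : 2 * A.det ≤ mip A A := by
  rw [mip_eq_entries, det_fin_two]
  nlinarith [sq_nonneg (A 0 0 - A 1 1), sq_nonneg (A 0 1 + A 1 0)]

def cofmCLM : M2 →L[ℝ] M2 :=
  LinearMap.toContinuousLinearMap
    { toFun := cofm
      map_add' := fun A B => by ext i j; fin_cases i <;> fin_cases j <;> simp [cofm, add_comm]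
      map_smul' := fun c A => by ext i j; fin_cases i <;> fin_cases j <;> simp [cofm] }

section Deriv

variable {f g : ℝ → M2} {f' g' : M2} {t : ℝ}

lemma HasDerivAt.cofm (hf : HasDerivAt f f' t) : HasDerivAt (fun s => cofm (f s)) (cofm f') t :=
  cofmCLM.hasFDerivAt.comp_hasDerivAt t hf

lemma HasDerivAt.mip (hf : HasDerivAt f f' t) (hg : HasDerivAt g g' t) :
    HasDerivAt (fun s => mip (f s) (g s)) (mip f' (g t) + mip (f t) g') t := by
  have hfe (i j : Fin 2) : HasDerivAt (fun s => f s i j) (f' i j) t :=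
    hasDerivAt_pi.1 (hasDerivAt_pi.1 hf i) j
  have hge (i j : Fin 2) : HasDerivAt (fun s => g s i j) (g' i j) t :=
    hasDerivAt_pi.1 (hasDerivAt_pi.1 hg i) j
  simp only [mip_eq_entries]
  exact (((((hfe 0 0).mul (hge 0 0)).add ((hfe 0 1).mul (hge 0 1))).add
    ((hfe 1 0).mul (hge 1 0))).add ((hfe 1 1).mul (hge 1 1))).congr_deriv (by ring)

lemma hasDerivAt_det (hf : HasDerivAt f f' t) :
    HasDerivAt (fun s => (f s).det) (mip (cofm (f t)) f') t := by
  have hdet : (fun s => (f s).det) = fun s => 1 / 2 * mip (cofm (f s)) (f s) := by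
    ext s; rw [mip_cofm_self]; ring
  rw [hdet]
  exact ((hf.cofm.mip hf).const_mul (1 / 2)).congr_deriv (by rw [mip_cofm_comm f']; ring)

end Deriv

lemma sign_eq_of_mul_pos_eq {a b p q : ℝ} (hp : 0 < p) (hq : 0 < q) (h : a * p = b * q) :
    SignType.sign a = SignType.sign b := by
  simpa only [sign_mul, sign_pos hp, sign_pos hq, mul_one] using congrArg SignType.sign h

section AffineMotion

variable {κ : ℝ} {A B : ℝ → M2} {lam : ℝ → ℝ}

lemma mip_cofm_eq_zero_of_det_const {c : ℝ} (hA : ∀ t, HasDerivAt A (B t) t)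
    (hdet : ∀ t, (A t).det = c) (t : ℝ) : mip (cofm (A t)) (B t) = 0 := by
  have h := hasDerivAt_det (hA t)
  rw [show (fun s => (A s).det) = fun _ => c from funext hdet] at h
  exact h.unique (hasDerivAt_const t c)

variable (hA : ∀ t, HasDerivAt A (B t) t)
  (hB : ∀ t, HasDerivAt B (lam t • cofm (A t) - κ • A t) t) (hdet : ∀ t, (A t).det = 1)
include hA hB hdet

lemma lam_mul_mip_self (t : ℝ) : lam t * mip (A t) (A t) = 2 * (κ - (B t).det) := by
  have h := (hA t).cofm.mip (hB t)
  rw [show (fun s => mip (cofm (A s)) (B s)) = fun _ => 0 from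
    funext (mip_cofm_eq_zero_of_det_const hA hdet)] at h
  have h0 := (hasDerivAt_const t (0 : ℝ)).unique h
  rw [mip_sub_right, mip_smul_right, mip_smul_right, mip_cofm_cofm, mip_cofm_self,
    mip_cofm_self, hdet t] at h0
  linarith

lemma hasDerivAt_mip_self_mul_sub_det (t : ℝ) :
    HasDerivAt (fun s => mip (A s) (A s) * (κ - (B s).det)) 0 t := by
  refine (((hA t).mip (hA t)).mul
    ((hasDerivAt_const t κ).sub (hasDerivAt_det (hB t)))).congr_deriv ?_
  rw [mip_sub_right, mip_smul_right, mip_smul_right, mip_cofm_cofm, mip_cofm_comm (B t),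
    mip_cofm_eq_zero_of_det_const hA hdet t, mip_comm (B t), Pi.sub_apply]
  linear_combination (-mip (A t) (B t)) * lam_mul_mip_self hA hB hdet t

lemma lam_mul_mip_self_sq_eq (t : ℝ) :
    lam t * mip (A t) (A t) ^ 2 = lam 0 * mip (A 0) (A 0) ^ 2 := by
  have hconst := is_const_of_deriv_eq_zero
    (fun s => (hasDerivAt_mip_self_mul_sub_det hA hB hdet s).differentiableAt)
    (fun s => (hasDerivAt_mip_self_mul_sub_det hA hB hdet s).deriv) t 0
  linear_combination mip (A t) (A t) * lam_mul_mip_self hA hB hdet t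
    - mip (A 0) (A 0) * lam_mul_mip_self hA hB hdet 0 + 2 * hconst

end AffineMotion

theorem pressure_sign_preserved_general (κ : ℝ) (A : ℝ → M2) (lam : ℝ → ℝ)
    (hA : ContDiff ℝ 2 A)
    (hdet : ∀ t : ℝ, (A t).det = 1)
    (hode : ∀ t : ℝ, deriv (deriv A) t + κ • A t = lam t • cofm (A t)) :
    ∀ t : ℝ, (0 < lam t ↔ 0 < lam 0) ∧ (lam t = 0 ↔ lam 0 = 0) ∧
      (lam t < 0 ↔ lam 0 < 0) := by
  have hA' (t : ℝ) : HasDerivAt A (deriv A t) t :=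
    (hA.differentiable (by norm_num) t).hasDerivAt
  have hB' (t : ℝ) : HasDerivAt (deriv A) (lam t • cofm (A t) - κ • A t) t := by
    rw [← hode t, add_sub_cancel_right]
    exact (hA.differentiable_deriv_two t).hasDerivAt
  have hpos (t : ℝ) : 0 < mip (A t) (A t) ^ 2 := by
    have := two_mul_det_le_mip_self (A t)
    rw [hdet t] at this
    exact pow_pos (by linarith) 2
  intro t
  have hsign := sign_eq_of_mul_pos_eq (hpos t) (hpos 0) (lam_mul_mip_self_sq_eq hA' hB' hdet t)
  exact ⟨by rw [← sign_eq_one_iff, hsign, sign_eq_one_iff],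
    by rw [← sign_eq_zero_iff, hsign, sign_eq_zero_iff],
    by rw [← sign_eq_neg_one_iff, hsign, sign_eq_neg_one_iff]⟩

/-- the sign of the multiplier (pressure) is preserved in time. -/
theorem pressure_sign_preserved (κ : ℝ) (hκ : 0 ≤ κ) (A : ℝ → M2) (lam : ℝ → ℝ)
    (hA : ContDiff ℝ 2 A) (hlam : Continuous lam)
    (hdet : ∀ t : ℝ, (A t).det = 1)
    (hode : ∀ t : ℝ, deriv (deriv A) t + κ • A t = lam t • cofm (A t)) :
    ∀ t : ℝ, (0 < lam t ↔ 0 < lam 0) ∧ (lam t = 0 ↔ lam 0 = 0) ∧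
      (lam t < 0 ↔ lam 0 < 0) :=
  pressure_sign_preserved_general κ A lam hA hdet hode
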